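/- arXiv:2508.11241 — 3 statements merged into one kernel-verified Lean document; each statement's English description precedes it below -/
import Mathlib

section
/- For every positive integer n and every real number α, the sum over all tuples (m₁,…,m_n) of nonnegative integers satisfying ∑_{ℓ=1}^n ℓ·m_ℓ = n of the product ∏_{l=1}^n α^{m_l}/(m_l! · l^{m_l}) equals α(α+1)⋯(α+n−1)/n!. -/
open Finset

noncomputable def Saux (α : ℝ) (N j : ℕ) : ℝ :=
  ∑ m ∈ Finset.univ.filter
      (fun m : Fin N → Fin (N + 1) => ∑ l : Fin N, (l.1 + 1) * (m l).1 = j),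
    ∏ l : Fin N, α ^ (m l).1 /
      ((Nat.factorial (m l).1 : ℝ) * (l.1 + 1 : ℝ) ^ (m l).1)

lemma Saux_zero (α : ℝ) : Saux α 0 0 = 1 := by
  simp [Saux]

lemma term_le {N M j : ℕ} {m : Fin N → Fin M}
    (hm : ∑ l : Fin N, (l.1 + 1) * (m l).1 = j) (k : Fin N) :
    (k.1 + 1) * (m k).1 ≤ j := by
  rw [← hm]
  exact Finset.single_le_sum (f := fun l : Fin N => (l.1 + 1) * (m l).1)
    (fun i _ => Nat.zero_le _) (Finset.mem_univ k)

lemma Saux_trunc_step (α : ℝ) (N j : ℕ) (h : j ≤ N) : Saux α (N + 1) j = Saux α N j := by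
  classical
  unfold Saux
  refine Finset.sum_bij'
    (fun m hm => fun k : Fin N => ⟨(m k.castSucc).1, ?_⟩)
    (fun m' hm' => fun k : Fin (N+1) =>
      if hk : k.1 < N then ⟨(m' ⟨k.1, hk⟩).1, by have := (m' ⟨k.1, hk⟩).2; omega⟩ else 0)
    ?_ ?_ ?_ ?_ ?_
  · -- bound for forward map
    simp only [Finset.mem_filter, Finset.mem_univ, true_and] at hm
    have := term_le hm k.castSucc
    simp only [Fin.coe_castSucc] at this
    have hk : (m k.castSucc).1 ≤ j := le_trans (Nat.le_mul_of_pos_left _ (by omega)) this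
    omega
  · -- forward membership
    intro m hm
    simp only [Finset.mem_filter, Finset.mem_univ, true_and] at hm ⊢
    have hlast : (m (Fin.last N)).1 = 0 := by
      have := term_le hm (Fin.last N)
      simp only [Fin.val_last] at this
      nlinarith [this]
    rw [Fin.sum_univ_castSucc] at hm
    simp only [Fin.val_last, hlast, Nat.mul_zero, Nat.add_zero, Fin.coe_castSucc] at hm
    exact hm
  · -- reverse membership
    intro m' hm'
    simp only [Finset.mem_filter, Finset.mem_univ, true_and] at hm' ⊢
    rw [Fin.sum_univ_castSucc]
    have hstep : ∀ k : Fin N,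
        ((k.castSucc).1 + 1) * ((if hk : (k.castSucc).1 < N then
          (⟨(m' ⟨(k.castSucc).1, hk⟩).1, by have := (m' ⟨(k.castSucc).1, hk⟩).2; omega⟩ : Fin (N+2)) else 0)).1
        = (k.1 + 1) * (m' k).1 := by
      intro k
      have hk : (k.castSucc).1 < N := k.2
      rw [dif_pos hk]
      have hkk : (⟨(k.castSucc).1, hk⟩ : Fin N) = k := Fin.ext rfl
      exact congrArg (fun x : Fin N => (x.1 + 1) * (m' x).1) hkk
    simp only [hstep]
    simp [hm']
  · intro m hm
    funext k
    beta_reduce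
    by_cases hk : k.1 < N
    · rw [dif_pos hk]
      have hkk : ((⟨k.1, hk⟩ : Fin N)).castSucc = k := Fin.ext rfl
      exact Fin.ext (congrArg (fun x => (m x).1) hkk)
    · have hkN : k = Fin.last N := by
        apply Fin.ext; simp only [Fin.val_last]; omega
      simp only [dif_neg hk]
      simp only [Finset.mem_filter, Finset.mem_univ, true_and] at hm
      have := term_le hm (Fin.last N)
      simp only [Fin.val_last] at this
      subst hkN
      apply Fin.ext
      simp only [Fin.val_zero]
      nlinarith [this]
  · intro m' hm'
    funext k
    beta_reduce
    have hk : (k.castSucc).1 < N := k.2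
    have hkk : (⟨(k.castSucc).1, hk⟩ : Fin N) = k := Fin.ext rfl
    apply Fin.ext
    simp only [dif_pos hk]
    exact congrArg (fun x : Fin N => (m' x).1) hkk
  · -- values of the summand agree
    intro m hm
    beta_reduce
    simp only [Finset.mem_filter, Finset.mem_univ, true_and] at hm
    have hlast : (m (Fin.last N)).1 = 0 := by
      have := term_le hm (Fin.last N)
      simp only [Fin.val_last] at this
      nlinarith [this]
    rw [Fin.prod_univ_castSucc]
    simp [hlast]

lemma Saux_trunc (α : ℝ) (N j : ℕ) (h : j ≤ N) : Saux α N j = Saux α j j := by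
  induction N with
  | zero => interval_cases j; rfl
  | succ N ih =>
    rcases Nat.lt_or_ge j (N+1) with h' | h'
    · rw [Saux_trunc_step α N j (by omega), ih (by omega)]
    · have : j = N + 1 := by omega
      subst this; rfl

lemma sum_split {j M : ℕ} (m : Fin j → Fin M) (l : Fin j) :
    ∑ k : Fin j, (k.1 + 1) * (m k).1
      = (l.1 + 1) * (m l).1 + ∑ k ∈ Finset.univ.erase l, (k.1 + 1) * (m k).1 :=
  (Finset.add_sum_erase _ _ (Finset.mem_univ l)).symm

lemma sum_update_split {j M : ℕ} (m : Fin j → Fin M) (l : Fin j) (v : Fin M) :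
    ∑ k : Fin j, (k.1 + 1) * ((Function.update m l v) k).1
      = (l.1 + 1) * v.1 + ∑ k ∈ Finset.univ.erase l, (k.1 + 1) * (m k).1 := by
  rw [← Finset.add_sum_erase _
    (fun k : Fin j => (k.1 + 1) * ((Function.update m l v) k).1) (Finset.mem_univ l)]
  congr 1
  · rw [Function.update_self]
  · exact Finset.sum_congr rfl fun k hk => by
      rw [Function.update_of_ne (Finset.mem_erase.1 hk).1]

lemma prod_split {j M : ℕ} (α : ℝ) (m : Fin j → Fin M) (l : Fin j) :
    ∏ k : Fin j, α ^ (m k).1 / ((Nat.factorial (m k).1 : ℝ) * (k.1 + 1 : ℝ) ^ (m k).1)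
      = (α ^ (m l).1 / ((Nat.factorial (m l).1 : ℝ) * (l.1 + 1 : ℝ) ^ (m l).1)) *
        ∏ k ∈ Finset.univ.erase l,
          α ^ (m k).1 / ((Nat.factorial (m k).1 : ℝ) * (k.1 + 1 : ℝ) ^ (m k).1) :=
  (Finset.mul_prod_erase _ _ (Finset.mem_univ l)).symm

lemma prod_update_split {j M : ℕ} (α : ℝ) (m : Fin j → Fin M) (l : Fin j) (v : Fin M) :
    ∏ k : Fin j, α ^ ((Function.update m l v) k).1 /
        ((Nat.factorial ((Function.update m l v) k).1 : ℝ) *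
          (k.1 + 1 : ℝ) ^ ((Function.update m l v) k).1)
      = (α ^ v.1 / ((Nat.factorial v.1 : ℝ) * (l.1 + 1 : ℝ) ^ v.1)) *
        ∏ k ∈ Finset.univ.erase l,
          α ^ (m k).1 / ((Nat.factorial (m k).1 : ℝ) * (k.1 + 1 : ℝ) ^ (m k).1) := by
  rw [← Finset.mul_prod_erase _
    (fun k : Fin j => α ^ ((Function.update m l v) k).1 /
        ((Nat.factorial ((Function.update m l v) k).1 : ℝ) *
          (k.1 + 1 : ℝ) ^ ((Function.update m l v) k).1)) (Finset.mem_univ l)]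
  congr 1
  · rw [Function.update_self]
  · exact Finset.prod_congr rfl fun k hk => by
      rw [Function.update_of_ne (Finset.mem_erase.1 hk).1]

lemma Saux_rec (α : ℝ) (j : ℕ) :
    (j : ℝ) * Saux α j j = α * ∑ i ∈ Finset.range j, Saux α j i := by
  classical
  have key : ∀ l : Fin j,
      ∑ m ∈ Finset.univ.filter
          (fun m : Fin j → Fin (j + 1) => ∑ k : Fin j, (k.1 + 1) * (m k).1 = j),
        (((l.1 + 1) * (m l).1 : ℕ) : ℝ) *
          ∏ k : Fin j, α ^ (m k).1 /
            ((Nat.factorial (m k).1 : ℝ) * (k.1 + 1 : ℝ) ^ (m k).1)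
      = α * Saux α j (j - (l.1 + 1)) := by
    intro l
    rw [← Finset.sum_filter_of_ne (p := fun m : Fin j → Fin (j+1) => (m l).1 ≠ 0)
      (fun m _ hne => by
        intro h0
        apply hne
        rw [h0]
        simp)]
    rw [Saux, Finset.mul_sum]
    refine Finset.sum_bij'
      (fun m hm => Function.update m l ⟨(m l).1 - 1, by have := (m l).2; omega⟩)
      (fun m' hm' => Function.update m' l ⟨(m' l).1 + 1, ?_⟩)
      ?_ ?_ ?_ ?_ ?_
    · -- bound for reverse map
      simp only [Finset.mem_filter, Finset.mem_univ, true_and] at hm'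
      have h1 := term_le hm' l
      have h2 : l.1 < j := l.2
      have h3 : (m' l).1 ≤ (l.1 + 1) * (m' l).1 := Nat.le_mul_of_pos_left _ (by omega)
      omega
    · -- forward membership
      intro m hm
      simp only [Finset.mem_filter, Finset.mem_univ, true_and] at hm ⊢
      obtain ⟨hsum, hne⟩ := hm
      rw [sum_split m l] at hsum
      rw [sum_update_split]
      simp only [Fin.val_mk]
      have hmul : (l.1 + 1) * ((m l).1 - 1) = (l.1 + 1) * (m l).1 - (l.1 + 1) := by
        rw [Nat.mul_sub, Nat.mul_one]
      have hle : (l.1 + 1) ≤ (l.1 + 1) * (m l).1 :=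
        Nat.le_mul_of_pos_right _ (by omega)
      omega
    · -- reverse membership
      intro m' hm'
      simp only [Finset.mem_filter, Finset.mem_univ, true_and] at hm' ⊢
      have h2 : l.1 < j := l.2
      have h1 := term_le hm' l
      rw [sum_split m' l] at hm'
      constructor
      · rw [sum_update_split]
        simp only [Fin.val_mk]
        have hmul : (l.1 + 1) * ((m' l).1 + 1) = (l.1 + 1) * (m' l).1 + (l.1 + 1) := by
          rw [Nat.mul_add, Nat.mul_one]
        omega
      · rw [Function.update_self]
        simp only [Fin.val_mk]
        omega
    · -- left inverse
      intro m hm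
      simp only [Finset.mem_filter, Finset.mem_univ, true_and] at hm
      funext k
      by_cases hk : k = l
      · subst hk
        simp only [Function.update_self]
        apply Fin.ext
        simp only [Function.update_self, Fin.val_mk]
        omega
      · simp only [Function.update_of_ne hk]
    · -- right inverse
      intro m' hm'
      funext k
      by_cases hk : k = l
      · subst hk
        simp only [Function.update_self]
        apply Fin.ext
        simp only [Function.update_self, Fin.val_mk]
        omega
      · simp only [Function.update_of_ne hk]
    · -- summand equality
      intro m hm
      simp only [Finset.mem_filter, Finset.mem_univ, true_and] at hm
      obtain ⟨hsum, hne⟩ := hm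
      rw [prod_split α m l, prod_update_split]
      rw [← mul_assoc, ← mul_assoc]
      congr 1
      simp only [Fin.val_mk]
      obtain ⟨d, hd⟩ : ∃ d, (m l).1 = d + 1 := ⟨(m l).1 - 1, by omega⟩
      rw [hd]
      have hv : (d + 1) - 1 = d := by omega
      rw [hv]
      have hfac : (Nat.factorial (d+1) : ℝ) = (d + 1 : ℝ) * (Nat.factorial d : ℝ) := by
        rw [Nat.factorial_succ]; push_cast; ring
      have hfd : (Nat.factorial d : ℝ) ≠ 0 := Nat.cast_ne_zero.2 (Nat.factorial_ne_zero d)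
      have hL : (l.1 + 1 : ℝ) ≠ 0 := by positivity
      rw [pow_succ, pow_succ, hfac]
      push_cast
      field_simp
  -- main computation
  rw [Saux, Finset.mul_sum]
  rw [Finset.sum_congr rfl (fun m hm => by
    have hsum : ∑ l : Fin j, (l.1 + 1) * (m l).1 = j :=
      (Finset.mem_filter.1 hm).2
    have hcast : (j : ℝ) = ∑ l : Fin j, (((l.1 + 1) * (m l).1 : ℕ) : ℝ) := by
      rw [← Nat.cast_sum, hsum]
    rw [hcast, Finset.sum_mul])]
  rw [Finset.sum_comm]
  rw [Finset.sum_congr rfl (fun l _ => key l)]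
  rw [← Finset.mul_sum]
  congr 1
  rw [Fin.sum_univ_eq_sum_range (fun l => Saux α j (j - (l + 1))) j]
  rw [← Finset.sum_range_reflect (fun i => Saux α j i) j]
  exact Finset.sum_congr rfl (fun i hi => by
    congr 1
    omega)

lemma hockey (α : ℝ) : ∀ j : ℕ,
    α * ∑ i ∈ Finset.range j, (∏ k ∈ Finset.range i, (α + k)) / (Nat.factorial i : ℝ)
      = (j : ℝ) * ((∏ k ∈ Finset.range j, (α + k)) / (Nat.factorial j : ℝ)) := by
  intro j
  induction j with
  | zero => simp
  | succ j ih =>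
    rw [Finset.sum_range_succ, mul_add, ih]
    rw [Finset.prod_range_succ, Nat.factorial_succ]
    have hfj : (Nat.factorial j : ℝ) ≠ 0 := Nat.cast_ne_zero.2 (Nat.factorial_ne_zero j)
    have hfj1 : ((j + 1 : ℕ) : ℝ) ≠ 0 := by positivity
    push_cast
    field_simp
    ring

lemma Saux_formula (α : ℝ) : ∀ j : ℕ,
    Saux α j j = (∏ k ∈ Finset.range j, (α + k)) / (Nat.factorial j : ℝ) := by
  intro j
  induction j using Nat.strong_induction_on with
  | _ j ih =>
    rcases Nat.eq_zero_or_pos j with hj | hj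
    · subst hj
      simpa using Saux_zero α
    · have hrec := Saux_rec α j
      have htr : ∀ i ∈ Finset.range j, Saux α j i = Saux α i i := fun i hi =>
        Saux_trunc α j i (le_of_lt (Finset.mem_range.1 hi))
      rw [Finset.sum_congr rfl htr] at hrec
      rw [Finset.sum_congr rfl (fun i hi => ih i (Finset.mem_range.1 hi))] at hrec
      rw [hockey α j] at hrec
      have hjne : (j : ℝ) ≠ 0 := Nat.cast_ne_zero.2 (by omega)
      exact mul_left_cancel₀ hjne hrec

/-- Lemma B.1: for a positive integer `n` and real `α`,
`∑_{∑ ℓ m_ℓ = n} ∏_{l=1}^n α^{m_l}/(m_l! l^{m_l}) = α(α+1)⋯(α+n−1)/n!`.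
Tuples `(m₁,…,m_n)` are encoded as functions `Fin n → Fin (n+1)` (the constraint
forces each `m_l ≤ n`), with `m_{l+1} =` value at index `l : Fin n`. -/
theorem stmt17 (n : ℕ) (hn : 1 ≤ n) (α : ℝ) :
    ∑ m ∈ Finset.univ.filter
        (fun m : Fin n → Fin (n + 1) => ∑ l : Fin n, (l.1 + 1) * (m l).1 = n),
      ∏ l : Fin n, α ^ (m l).1 /
        ((Nat.factorial (m l).1 : ℝ) * (l.1 + 1 : ℝ) ^ (m l).1) =
    (∏ k ∈ Finset.range n, (α + k)) / (Nat.factorial n : ℝ) :=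
  Saux_formula α n
end

section
/- Let (θ₁,…,θ_N) be the global solution of the first-order Kuramoto model with coupling strength κ > 0, natural frequencies ν₁,…,ν_N, and initial data (θᵢ⁰). Then for every integer n ≥ 2, all i, j ∈ {1,…,N}, and all t ≥ 0: (i) |θᵢ^{(n)}(t)| ≤ κ (n−1)! (D(V) + 2κ)^{n−1}, and (ii) |θᵢ^{(n)}(t) − θⱼ^{(n)}(t)| ≤ (n−1)! (D(V) + 2κ)ⁿ, where θᵢ^{(n)} denotes the n-th time derivative and D(V) = max_{i,j}|νᵢ − νⱼ|. -/
open Filter Topology MeasureTheory intervalIntegral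

noncomputable section

/-- A global smooth solution of the inertial Kuramoto model
`m θ̈ᵢ + θ̇ᵢ = νᵢ + (κ/N) ∑ⱼ sin(θⱼ - θᵢ)` with initial data `θᵢ(0) = θ0 i`,
`θ̇ᵢ(0) = ω0 i`. -/
def IsInertialSol (N : ℕ) (m κ : ℝ) (ν θ0 ω0 : Fin N → ℝ) (θ : Fin N → ℝ → ℝ) : Prop :=
  (∀ i, ContDiff ℝ (⊤ : ℕ∞) (θ i)) ∧
  (∀ i, θ i 0 = θ0 i) ∧
  (∀ i, deriv (θ i) 0 = ω0 i) ∧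
  (∀ i, ∀ t : ℝ, 0 ≤ t →
    m * deriv (deriv (θ i)) t + deriv (θ i) t
      = ν i + (κ / N) * ∑ j, Real.sin (θ j t - θ i t))

/-- A global smooth solution of the first-order Kuramoto model
`θ̇ᵢ = νᵢ + (κ/N) ∑ⱼ sin(θⱼ - θᵢ)` with initial data `θᵢ(0) = θ0 i`. -/
def IsFirstOrderSol (N : ℕ) (κ : ℝ) (ν θ0 : Fin N → ℝ) (θ : Fin N → ℝ → ℝ) : Prop :=
  (∀ i, ContDiff ℝ (⊤ : ℕ∞) (θ i)) ∧
  (∀ i, θ i 0 = θ0 i) ∧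
  (∀ i, ∀ t : ℝ, 0 ≤ t →
    deriv (θ i) t = ν i + (κ / N) * ∑ j, Real.sin (θ j t - θ i t))

open Set
open scoped ContDiff

private lemma natCast_le_infty (n : ℕ) : (n : WithTop ℕ∞) ≤ ∞ := by exact_mod_cast le_top

private lemma one_le_infty : (1 : WithTop ℕ∞) ≤ ∞ := by exact_mod_cast le_top

private lemma eqOn_deriv' {f g : ℝ → ℝ} (hf : ContDiff ℝ ∞ f) (hg : ContDiff ℝ ∞ g)
    (h : Set.EqOn f g (Set.Ici 0)) : Set.EqOn (deriv f) (deriv g) (Set.Ici 0) := by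
  have h1 : Set.EqOn (deriv f) (deriv g) (Set.Ioi 0) := fun x hx =>
    Filter.EventuallyEq.deriv_eq <|
      Filter.eventuallyEq_of_mem (Ioi_mem_nhds hx) fun y hy => h (Set.mem_Ici.mpr (le_of_lt (Set.mem_Ioi.mp hy)))
  have h2 := h1.closure (hf.continuous_deriv one_le_infty) (hg.continuous_deriv one_le_infty)
  intro x hx
  exact h2 (by rwa [closure_Ioi])

private lemma eqOn_iteratedDeriv' {f g : ℝ → ℝ} (hf : ContDiff ℝ ∞ f) (hg : ContDiff ℝ ∞ g)
    (h : Set.EqOn f g (Set.Ici 0)) (n : ℕ) :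
    Set.EqOn (iteratedDeriv n f) (iteratedDeriv n g) (Set.Ici 0) := by
  induction n generalizing f g with
  | zero => simpa [iteratedDeriv_zero] using h
  | succ n ih =>
    rw [iteratedDeriv_succ', iteratedDeriv_succ']
    exact ih (contDiff_infty_iff_deriv.mp hf).2 (contDiff_infty_iff_deriv.mp hg).2
      (eqOn_deriv' hf hg h)

private lemma itd_sub' {f g : ℝ → ℝ} (hf : ContDiff ℝ ∞ f) (hg : ContDiff ℝ ∞ g) (n : ℕ) (t : ℝ) :
    iteratedDeriv n (fun s => f s - g s) t = iteratedDeriv n f t - iteratedDeriv n g t := by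
  have h := iteratedDerivWithin_sub (Set.mem_univ t) uniqueDiffOn_univ
    (hf.of_le (natCast_le_infty n)).contDiffWithinAt (hg.of_le (natCast_le_infty n)).contDiffWithinAt
  rw [iteratedDerivWithin_univ, iteratedDerivWithin_univ, iteratedDerivWithin_univ] at h
  exact h

private lemma itd_const_add' (c : ℝ) {f : ℝ → ℝ} {n : ℕ} (hn : 0 < n) (t : ℝ) :
    iteratedDeriv n (fun s => c + f s) t = iteratedDeriv n f t := by
  have h := iteratedDerivWithin_const_add (f := f) (s := Set.univ) (x := t) hn c
  rwa [iteratedDerivWithin_univ, iteratedDerivWithin_univ] at h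

private lemma itd_const_mul' (c : ℝ) {f : ℝ → ℝ} (hf : ContDiff ℝ ∞ f) (n : ℕ) (t : ℝ) :
    iteratedDeriv n (fun s => c * f s) t = c * iteratedDeriv n f t := by
  have h := iteratedDerivWithin_const_mul (Set.mem_univ t) uniqueDiffOn_univ c
    (hf.of_le (natCast_le_infty n)).contDiffWithinAt
  rwa [iteratedDerivWithin_univ, iteratedDerivWithin_univ] at h

private lemma itd_sum' {ι : Type*} (u : Finset ι) {f : ι → ℝ → ℝ}
    (hf : ∀ k ∈ u, ContDiff ℝ ∞ (f k)) (n : ℕ) (t : ℝ) :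
    iteratedDeriv n (fun s => ∑ k ∈ u, f k s) t = ∑ k ∈ u, iteratedDeriv n (f k) t := by
  rw [iteratedDeriv_eq_iteratedFDeriv,
    iteratedFDeriv_sum (fun j hj => (hf j hj).of_le (natCast_le_infty n))]
  simp [iteratedDeriv_eq_iteratedFDeriv]

private lemma deriv_sin_comp' {φ : ℝ → ℝ} (hφ : Differentiable ℝ φ) :
    deriv (fun s => Real.sin (φ s)) = fun s => deriv φ s * Real.cos (φ s) := by
  funext t
  rw [((hφ t).hasDerivAt.sin).deriv, mul_comm]

private lemma deriv_cos_comp' {φ : ℝ → ℝ} (hφ : Differentiable ℝ φ) :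
    deriv (fun s => Real.cos (φ s)) = fun s => deriv φ s * (-Real.sin (φ s)) := by
  funext t
  rw [((hφ t).hasDerivAt.cos).deriv, mul_comm]

private lemma leibniz_bound' {u v : ℝ → ℝ} (hu : ContDiff ℝ ∞ u) (hv : ContDiff ℝ ∞ v)
    {C : ℝ} (hC : 0 ≤ C) (l : ℕ) (t : ℝ)
    (hub : ∀ k, k ≤ l → |iteratedDeriv k u t| ≤ k.factorial * C ^ (k + 1))
    (hvb : ∀ k, k ≤ l → |iteratedDeriv k v t| ≤ k.factorial * C ^ k) :
    |iteratedDeriv l (fun s => u s * v s) t| ≤ (l + 1).factorial * C ^ (l + 1) := by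
  have h1 := norm_iteratedFDeriv_mul_le (𝕜 := ℝ) hu hv t (natCast_le_infty l)
  rw [norm_iteratedFDeriv_eq_norm_iteratedDeriv, Real.norm_eq_abs] at h1
  have h2 : ∑ k ∈ Finset.range (l + 1),
      (l.choose k : ℝ) * ‖iteratedFDeriv ℝ k u t‖ * ‖iteratedFDeriv ℝ (l - k) v t‖
      ≤ ∑ _k ∈ Finset.range (l + 1), (l.factorial : ℝ) * C ^ (l + 1) := by
    apply Finset.sum_le_sum
    intro k hk
    have hkl : k ≤ l := Nat.lt_succ_iff.mp (Finset.mem_range.mp hk)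
    rw [norm_iteratedFDeriv_eq_norm_iteratedDeriv, norm_iteratedFDeriv_eq_norm_iteratedDeriv,
      Real.norm_eq_abs, Real.norm_eq_abs]
    calc (l.choose k : ℝ) * |iteratedDeriv k u t| * |iteratedDeriv (l - k) v t|
        ≤ (l.choose k : ℝ) * (k.factorial * C ^ (k + 1)) * ((l - k).factorial * C ^ (l - k)) := by
          gcongr
          · exact hub k hkl
          · exact hvb (l - k) (Nat.sub_le l k)
      _ = ((l.choose k * k.factorial * (l - k).factorial : ℕ) : ℝ) * (C ^ (k + 1) * C ^ (l - k)) := by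
          push_cast; ring
      _ = (l.factorial : ℝ) * C ^ (l + 1) := by
          rw [Nat.choose_mul_factorial_mul_factorial hkl, ← pow_add]
          congr 2
          omega
  have h3 := h1.trans h2
  rw [Finset.sum_const, Finset.card_range, nsmul_eq_mul] at h3
  calc |iteratedDeriv l (fun s => u s * v s) t|
      ≤ ((l + 1 : ℕ) : ℝ) * ((l.factorial : ℝ) * C ^ (l + 1)) := h3
    _ = (l + 1).factorial * C ^ (l + 1) := by
        rw [Nat.factorial_succ]; push_cast; ring

/-- Lemma B.2: derivative bounds for the first-order Kuramoto flow. -/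
theorem stmt18 (N : ℕ) (hN : 1 ≤ N) (θ0 ν : Fin N → ℝ) (κ : ℝ) (hκ : 0 < κ)
    (θ : Fin N → ℝ → ℝ)
    (hθ : IsFirstOrderSol N κ ν θ0 θ) :
    ∀ n : ℕ, 2 ≤ n → ∀ i j, ∀ t : ℝ, 0 ≤ t →
      |iteratedDeriv n (θ i) t| ≤
        κ * (Nat.factorial (n - 1) : ℝ) * ((⨆ i', ⨆ j', |ν i' - ν j'|) + 2 * κ) ^ (n - 1) ∧
      |iteratedDeriv n (θ i) t - iteratedDeriv n (θ j) t| ≤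
        (Nat.factorial (n - 1) : ℝ) * ((⨆ i', ⨆ j', |ν i' - ν j'|) + 2 * κ) ^ n := by
  obtain ⟨hsm, -, hode⟩ := hθ
  have hthS : ∀ i, ContDiff ℝ ∞ (θ i) := fun i => (hsm i).of_le (by simp)
  have hθdiff : ∀ i, Differentiable ℝ (θ i) := fun i => (hsm i).differentiable (by simp)
  set D : ℝ := ⨆ i', ⨆ j', |ν i' - ν j'| with hDdef
  set C : ℝ := D + 2 * κ with hCdef
  haveI : Nonempty (Fin N) := ⟨⟨0, hN⟩⟩
  have hD : ∀ i j, |ν i - ν j| ≤ D := by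
    intro i j
    rw [hDdef]
    have h1 : |ν i - ν j| ≤ ⨆ j', |ν i - ν j'| :=
      le_ciSup (f := fun j' => |ν i - ν j'|) (Set.Finite.bddAbove (Set.finite_range _)) j
    exact h1.trans (le_ciSup (f := fun i' => ⨆ j', |ν i' - ν j'|)
      (Set.Finite.bddAbove (Set.finite_range _)) i)
  have hD0 : 0 ≤ D := le_trans (abs_nonneg _) (hD ⟨0, hN⟩ ⟨0, hN⟩)
  have hC0 : 0 < C := by rw [hCdef]; linarith
  have hNpos : (0 : ℝ) < N := by exact_mod_cast hN
  have hphS : ∀ i j, ContDiff ℝ ∞ (fun s => θ i s - θ j s) := fun i j => (hthS i).sub (hthS j)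
  have hsinS : ∀ i j, ContDiff ℝ ∞ (fun s => Real.sin (θ i s - θ j s)) := fun i j =>
    Real.contDiff_sin.comp (hphS i j)
  have hcosS : ∀ i j, ContDiff ℝ ∞ (fun s => Real.cos (θ i s - θ j s)) := fun i j =>
    Real.contDiff_cos.comp (hphS i j)
  have hdthS : ∀ i, ContDiff ℝ ∞ (deriv (θ i)) := fun i => (contDiff_infty_iff_deriv.mp (hthS i)).2
  have hdφ : ∀ i j, deriv (fun s => θ i s - θ j s) = fun s => deriv (θ i) s - deriv (θ j) s := by
    intro i j; funext s; exact deriv_sub (hθdiff i s) (hθdiff j s)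
  have hdphS : ∀ i j, ContDiff ℝ ∞ (deriv (fun s => θ i s - θ j s)) := fun i j =>
    (contDiff_infty_iff_deriv.mp (hphS i j)).2
  have hodeF : ∀ i, Set.EqOn (deriv (θ i))
      (fun s => ν i + κ / N * ∑ k, Real.sin (θ k s - θ i s)) (Set.Ici 0) :=
    fun i s hs => hode i s hs
  have hFS : ∀ i, ContDiff ℝ ∞ (fun s => ν i + κ / N * ∑ k, Real.sin (θ k s - θ i s)) := fun i =>
    contDiff_const.add (contDiff_const.mul (ContDiff.sum fun k _ => hsinS k i))
  have hGS : ∀ i j, ContDiff ℝ ∞ (fun s => (ν i - ν j) +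
      κ / N * ((∑ k, Real.sin (θ k s - θ i s)) - ∑ k, Real.sin (θ k s - θ j s))) := fun i j =>
    contDiff_const.add (contDiff_const.mul
      ((ContDiff.sum fun k _ => hsinS k i).sub (ContDiff.sum fun k _ => hsinS k j)))
  have hodeG : ∀ i j, Set.EqOn (deriv (fun s => θ i s - θ j s))
      (fun s => (ν i - ν j) +
        κ / N * ((∑ k, Real.sin (θ k s - θ i s)) - ∑ k, Real.sin (θ k s - θ j s)))
      (Set.Ici 0) := by
    intro i j s hs
    rw [hdφ i j]
    show deriv (θ i) s - deriv (θ j) s = _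
    rw [hode i s hs, hode j s hs]
    ring
  have hS : ∀ i t, |∑ k, Real.sin (θ k t - θ i t)| ≤ (N : ℝ) := by
    intro i t
    calc |∑ k, Real.sin (θ k t - θ i t)| ≤ ∑ k, |Real.sin (θ k t - θ i t)| :=
          Finset.abs_sum_le_sum_abs _ _
      _ ≤ ∑ _k : Fin N, (1 : ℝ) := Finset.sum_le_sum fun k _ => Real.abs_sin_le_one _
      _ = N := by simp
  have key : ∀ m : ℕ,
      (∀ i j, ∀ t : ℝ, 0 ≤ t →
        |iteratedDeriv m (fun s => Real.sin (θ i s - θ j s)) t| ≤ m.factorial * C ^ m ∧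
        |iteratedDeriv m (fun s => Real.cos (θ i s - θ j s)) t| ≤ m.factorial * C ^ m) ∧
      (∀ i j, ∀ t : ℝ, 0 ≤ t →
        |iteratedDeriv (m + 1) (fun s => θ i s - θ j s) t| ≤ m.factorial * C ^ (m + 1)) := by
    intro m
    induction m using Nat.strong_induction_on with
    | _ m IH =>
    have trig : ∀ i j, ∀ t : ℝ, 0 ≤ t →
        |iteratedDeriv m (fun s => Real.sin (θ i s - θ j s)) t| ≤ m.factorial * C ^ m ∧
        |iteratedDeriv m (fun s => Real.cos (θ i s - θ j s)) t| ≤ m.factorial * C ^ m := by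
      intro i j t ht
      cases m with
      | zero =>
        simp only [iteratedDeriv_zero, Nat.factorial_zero, Nat.cast_one, pow_zero, mul_one]
        exact ⟨Real.abs_sin_le_one _, Real.abs_cos_le_one _⟩
      | succ l =>
        have hul : ∀ k, k ≤ l →
            |iteratedDeriv k (deriv (fun s => θ i s - θ j s)) t| ≤ k.factorial * C ^ (k + 1) := by
          intro k hkl
          rw [← iteratedDeriv_succ']
          exact (IH k (by omega)).2 i j t ht
        have hdsin : deriv (fun s => Real.sin (θ i s - θ j s)) =
            fun s => deriv (fun s' => θ i s' - θ j s') s * Real.cos (θ i s - θ j s) :=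
          deriv_sin_comp' (φ := fun s => θ i s - θ j s) ((hphS i j).differentiable (by simp))
        have hdcos : deriv (fun s => Real.cos (θ i s - θ j s)) =
            fun s => deriv (fun s' => θ i s' - θ j s') s * (-Real.sin (θ i s - θ j s)) :=
          deriv_cos_comp' (φ := fun s => θ i s - θ j s) ((hphS i j).differentiable (by simp))
        constructor
        · rw [iteratedDeriv_succ', hdsin]
          exact leibniz_bound' (hdphS i j) (hcosS i j) hC0.le l t hul
            (fun k hkl => ((IH k (by omega)).1 i j t ht).2)
        · rw [iteratedDeriv_succ', hdcos]
          refine leibniz_bound' (hdphS i j) ((hsinS i j).neg) hC0.le l t hul ?_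
          intro k hkl
          rw [iteratedDeriv_fun_neg, abs_neg]
          exact ((IH k (by omega)).1 i j t ht).1
    refine ⟨trig, ?_⟩
    intro i j t ht
    cases m with
    | zero =>
      rw [zero_add, iteratedDeriv_one, hdφ i j]
      show |deriv (θ i) t - deriv (θ j) t| ≤ _
      rw [hode i t ht, hode j t ht]
      have hb : ∀ i', |κ / N * ∑ k, Real.sin (θ k t - θ i' t)| ≤ κ := by
        intro i'
        rw [abs_mul, abs_of_nonneg (by positivity : (0 : ℝ) ≤ κ / N)]
        calc κ / N * |∑ k, Real.sin (θ k t - θ i' t)| ≤ κ / N * N := by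
              have := hS i' t
              gcongr
          _ = κ := by field_simp
      have e1 := abs_le.mp (hD i j)
      have e2 := abs_le.mp (hb i)
      have e3 := abs_le.mp (hb j)
      have hgoal : ((Nat.factorial 0 : ℕ) : ℝ) * C ^ (0 + 1) = D + 2 * κ := by
        simp [hCdef]
      rw [hgoal, abs_le]
      constructor <;> linarith [e1.1, e1.2, e2.1, e2.2, e3.1, e3.2]
    | succ l =>
      rw [iteratedDeriv_succ']
      rw [eqOn_iteratedDeriv' (hdphS i j) (hGS i j) (hodeG i j) (l + 1) (Set.mem_Ici.mpr ht)]
      rw [itd_const_add' (ν i - ν j) (Nat.succ_pos l) t]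
      rw [itd_const_mul' (κ / N)
        ((ContDiff.sum fun k _ => hsinS k i).sub (ContDiff.sum fun k _ => hsinS k j)) (l + 1) t]
      rw [itd_sub' (ContDiff.sum fun k _ => hsinS k i) (ContDiff.sum fun k _ => hsinS k j)
        (l + 1) t]
      rw [itd_sum' Finset.univ (fun k _ => hsinS k i) (l + 1) t,
        itd_sum' Finset.univ (fun k _ => hsinS k j) (l + 1) t]
      rw [abs_mul, abs_of_nonneg (by positivity : (0 : ℝ) ≤ κ / N)]
      have hsum : ∀ i', |∑ k, iteratedDeriv (l + 1) (fun s => Real.sin (θ k s - θ i' s)) t| ≤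
          (N : ℝ) * ((l + 1).factorial * C ^ (l + 1)) := by
        intro i'
        calc |∑ k, iteratedDeriv (l + 1) (fun s => Real.sin (θ k s - θ i' s)) t|
            ≤ ∑ k, |iteratedDeriv (l + 1) (fun s => Real.sin (θ k s - θ i' s)) t| :=
              Finset.abs_sum_le_sum_abs _ _
          _ ≤ ∑ _k : Fin N, (((l + 1).factorial : ℝ) * C ^ (l + 1)) :=
              Finset.sum_le_sum fun k _ => (trig k i' t ht).1
          _ = (N : ℝ) * ((l + 1).factorial * C ^ (l + 1)) := by
              simp [Finset.sum_const, Finset.card_univ, nsmul_eq_mul]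
      calc κ / N * |(∑ k, iteratedDeriv (l + 1) (fun s => Real.sin (θ k s - θ i s)) t) -
              ∑ k, iteratedDeriv (l + 1) (fun s => Real.sin (θ k s - θ j s)) t|
          ≤ κ / N * ((N : ℝ) * ((l + 1).factorial * C ^ (l + 1)) +
              (N : ℝ) * ((l + 1).factorial * C ^ (l + 1))) := by
            refine mul_le_mul_of_nonneg_left ?_ (by positivity)
            exact (abs_sub _ _).trans (add_le_add (hsum i) (hsum j))
        _ = 2 * κ * (((l + 1).factorial : ℝ) * C ^ (l + 1)) := by field_simp; ring
        _ ≤ C * (((l + 1).factorial : ℝ) * C ^ (l + 1)) := by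
            refine mul_le_mul_of_nonneg_right (by rw [hCdef]; linarith) (by positivity)
        _ = ((l + 1).factorial : ℝ) * C ^ (l + 1 + 1) := by ring
  intro n hn i j t ht
  obtain ⟨l, rfl⟩ : ∃ l, n = l + 1 := ⟨n - 1, by omega⟩
  have hl : 1 ≤ l := by omega
  constructor
  · rw [iteratedDeriv_succ',
      eqOn_iteratedDeriv' (hdthS i) (hFS i) (hodeF i) l (Set.mem_Ici.mpr ht)]
    simp only [Nat.add_sub_cancel]
    rw [itd_const_add' (ν i) (by omega) t,
      itd_const_mul' (κ / N) (ContDiff.sum fun k _ => hsinS k i) l t,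
      itd_sum' Finset.univ (fun k _ => hsinS k i) l t]
    rw [abs_mul, abs_of_nonneg (by positivity : (0 : ℝ) ≤ κ / N)]
    calc κ / N * |∑ k, iteratedDeriv l (fun s => Real.sin (θ k s - θ i s)) t|
        ≤ κ / N * ((N : ℝ) * ((l.factorial : ℝ) * C ^ l)) := by
          refine mul_le_mul_of_nonneg_left ?_ (by positivity)
          calc |∑ k, iteratedDeriv l (fun s => Real.sin (θ k s - θ i s)) t|
              ≤ ∑ k, |iteratedDeriv l (fun s => Real.sin (θ k s - θ i s)) t| :=
                Finset.abs_sum_le_sum_abs _ _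
            _ ≤ ∑ _k : Fin N, ((l.factorial : ℝ) * C ^ l) :=
                Finset.sum_le_sum fun k _ => ((key l).1 k i t ht).1
            _ = (N : ℝ) * ((l.factorial : ℝ) * C ^ l) := by
                simp [Finset.sum_const, Finset.card_univ, nsmul_eq_mul]
      _ = κ * (l.factorial : ℝ) * C ^ l := by field_simp
  · rw [← itd_sub' (hthS i) (hthS j) (l + 1) t]
    simp only [Nat.add_sub_cancel]
    exact (key l).2 i j t ht
end
end

section
/- Let (θ₁,…,θ_N) be the global solution of the inertial Kuramoto model with inertia m > 0, coupling strength κ > 0, natural frequencies ν₁,…,ν_N, and initial data (θᵢ⁰, ωᵢ⁰). Then for every integer n ≥ 1, all i, j ∈ {1,…,N}, and all t ≥ 0, |θᵢ^{(n)}(t) − θⱼ^{(n)}(t)| ≤ (n−1)! · [ (2κ + D(Ω⁰) + D(V) + 9/(8m))ⁿ (1 + t/m)ⁿ e^{−t/m} + (2κ + D(V))ⁿ (1 − e^{−t/m}) ], where θᵢ^{(n)} denotes the n-th time derivative, D(Ω⁰) = max_{i,j}|ωᵢ⁰ − ωⱼ⁰|, and D(V) = max_{i,j}|νᵢ − νⱼ|.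 -/
open Filter Topology MeasureTheory intervalIntegral
open scoped ContDiff

noncomputable section

namespace Stmt19Aux

abbrev Sm (f : ℝ → ℝ) : Prop := ContDiff ℝ ∞ f

lemma Sm.deriv' {f : ℝ → ℝ} (hf : Sm f) : Sm (deriv f) := (contDiff_infty_iff_deriv.mp hf).2

lemma Sm.diffb {f : ℝ → ℝ} (hf : Sm f) : Differentiable ℝ f :=
  hf.differentiable (by simp)

lemma Sm.cd {f : ℝ → ℝ} (hf : Sm f) (n : ℕ) : ContDiff ℝ n f := hf.of_le (by exact_mod_cast le_top)

lemma Sm.iterated {f : ℝ → ℝ} (hf : Sm f) (n : ℕ) : Sm (iteratedDeriv n f) := by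
  rw [iteratedDeriv_eq_iterate]; exact hf.iterate_deriv n

lemma Sm.contb {f : ℝ → ℝ} (hf : Sm f) : Continuous f := hf.continuous

lemma itd_sub {f g : ℝ → ℝ} (hf : Sm f) (hg : Sm g) (n : ℕ) (x : ℝ) :
    iteratedDeriv n (fun t => f t - g t) x = iteratedDeriv n f x - iteratedDeriv n g x := by
  have h := iteratedDerivWithin_sub (Set.mem_univ x) uniqueDiffOn_univ
    ((hf.cd n).contDiffWithinAt) ((hg.cd n).contDiffWithinAt)
  simpa [iteratedDerivWithin_univ, Pi.sub_def] using h

lemma itd_add {f g : ℝ → ℝ} (hf : Sm f) (hg : Sm g) (n : ℕ) (x : ℝ) :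
    iteratedDeriv n (fun t => f t + g t) x = iteratedDeriv n f x + iteratedDeriv n g x := by
  have h := iteratedDerivWithin_add (Set.mem_univ x) uniqueDiffOn_univ
    ((hf.cd n).contDiffWithinAt) ((hg.cd n).contDiffWithinAt)
  simpa [iteratedDerivWithin_univ, Pi.add_def] using h

lemma itd_const_mul {f : ℝ → ℝ} (hf : Sm f) (c : ℝ) (n : ℕ) (x : ℝ) :
    iteratedDeriv n (fun t => c * f t) x = c * iteratedDeriv n f x := by
  have h := iteratedDerivWithin_const_mul (Set.mem_univ x) uniqueDiffOn_univ c
    ((hf.cd n).contDiffWithinAt)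
  simpa [iteratedDerivWithin_univ] using h

lemma itd_const_add {f : ℝ → ℝ} (c : ℝ) {n : ℕ} (hn : 0 < n) (x : ℝ) :
    iteratedDeriv n (fun t => c + f t) x = iteratedDeriv n f x := by
  have h := iteratedDerivWithin_const_add (s := Set.univ) (x := x) hn c (f := f)
  simpa [iteratedDerivWithin_univ] using h

lemma itd_zero (n : ℕ) (x : ℝ) : iteratedDeriv n (fun _ : ℝ => (0:ℝ)) x = 0 := by
  induction n generalizing x with
  | zero => simp [iteratedDeriv_zero]
  | succ n ih =>
    rw [iteratedDeriv_succ']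
    have : deriv (fun _ : ℝ => (0:ℝ)) = fun _ : ℝ => (0:ℝ) := by
      funext s; exact deriv_const s 0
    rw [this]
    exact ih x

lemma itd_sum {ι : Type*} (s : Finset ι) (f : ι → ℝ → ℝ) (hf : ∀ i ∈ s, Sm (f i))
    (n : ℕ) (x : ℝ) :
    iteratedDeriv n (fun t => ∑ i ∈ s, f i t) x = ∑ i ∈ s, iteratedDeriv n (f i) x := by
  induction s using Finset.cons_induction with
  | empty => simpa using itd_zero n x
  | cons a s ha ih =>
    simp only [Finset.sum_cons]
    rw [itd_add (hf a (Finset.mem_cons_self a s))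
      (ContDiff.sum fun i hi => hf i (Finset.mem_cons_of_mem hi)) n x,
      ih (fun i hi => hf i (Finset.mem_cons_of_mem hi))]

lemma itd_eqOn_Ici {f g : ℝ → ℝ} (hf : Sm f) (hg : Sm g)
    (h : ∀ t : ℝ, 0 ≤ t → f t = g t) (n : ℕ) :
    ∀ t : ℝ, 0 ≤ t → iteratedDeriv n f t = iteratedDeriv n g t := by
  have h1 : Set.EqOn (iteratedDeriv n f) (iteratedDeriv n g) (Set.Ioi 0) := by
    intro s hs
    have hfg : f =ᶠ[𝓝 s] g := by
      filter_upwards [Ioi_mem_nhds hs] with y hy using h y (le_of_lt hy)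
    exact hfg.iteratedDeriv_eq n
  have h2 := h1.closure ((hf.iterated n).contb) ((hg.iterated n).contb)
  intro t ht
  exact h2 (by rw [closure_Ioi]; exact ht)

lemma itd_mul_bound {f g : ℝ → ℝ} (hf : Sm f) (hg : Sm g) (n : ℕ) (x : ℝ) :
    |iteratedDeriv n (fun t => f t * g t) x| ≤ ∑ k ∈ Finset.range (n + 1),
      (n.choose k : ℝ) * |iteratedDeriv k f x| * |iteratedDeriv (n - k) g x| := by
  have h := norm_iteratedFDeriv_mul_le (𝕜 := ℝ) (hf.cd n) (hg.cd n) x (le_refl _)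
  simpa [norm_iteratedFDeriv_eq_norm_iteratedDeriv, Real.norm_eq_abs] using h

lemma kappa_sum_bound {N : ℕ} (hN : 1 ≤ N) {κ b : ℝ} (hκ : 0 ≤ κ) (v : Fin N → ℝ)
    (hv : ∀ k, |v k| ≤ b) : |κ / N * ∑ k, v k| ≤ κ * b := by
  have hN0 : (0:ℝ) < N := by exact_mod_cast hN
  have hb : 0 ≤ b := (abs_nonneg _).trans (hv ⟨0, hN⟩)
  rw [abs_mul, abs_div, abs_of_nonneg hκ, abs_of_nonneg hN0.le]
  calc κ / N * |∑ k, v k| ≤ κ / N * (N * b) := by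
        apply mul_le_mul_of_nonneg_left _ (by positivity)
        refine (Finset.abs_sum_le_sum_abs _ _).trans ?_
        calc ∑ k, |v k| ≤ ∑ _k : Fin N, b := Finset.sum_le_sum (fun k _ => hv k)
          _ = N * b := by
              rw [Finset.sum_const, Finset.card_univ, Fintype.card_fin, nsmul_eq_mul]
    _ = κ * b := by field_simp
/-- variation of constants bound -/
lemma ode_bound {m : ℝ} (hm : 0 < m) (x φ : ℝ → ℝ) (hx : Sm x) (hφ : Continuous φ)
    (h : ∀ s : ℝ, 0 ≤ s → |m * deriv x s + x s| ≤ φ s) (t : ℝ) (ht : 0 ≤ t) :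
    |x t| ≤ Real.exp (-t / m) * (|x 0| + (1 / m) * ∫ s in (0:ℝ)..t, Real.exp (s / m) * φ s) := by
  have hm' : m ≠ 0 := ne_of_gt hm
  have hdx : Continuous (deriv x) := hx.deriv'.contb
  set g : ℝ → ℝ := fun s => Real.exp (s / m) * (m * deriv x s + x s) / m with hg
  have hgc : Continuous g := by
    rw [hg]
    exact ((Real.continuous_exp.comp (continuous_id.div_const m)).mul
      ((continuous_const.mul hdx).add hx.contb)).div_const m
  have hydd : ∀ s : ℝ, HasDerivAt (fun s => Real.exp (s / m) * x s) (g s) s := by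
    intro s
    have h1 : HasDerivAt (fun s : ℝ => Real.exp (s / m)) (Real.exp (s / m) * (1 / m)) s := by
      simpa [Function.comp_def] using (Real.hasDerivAt_exp (s / m)).comp s ((hasDerivAt_id s).div_const m)
    have h2 : HasDerivAt x (deriv x s) s := (hx.diffb s).hasDerivAt
    have h3 := h1.mul h2
    refine h3.congr_deriv ?_
    rw [hg]
    field_simp
    ring
  have hFTC : (∫ s in (0:ℝ)..t, g s) = Real.exp (t / m) * x t - Real.exp (0 / m) * x 0 :=
    intervalIntegral.integral_eq_sub_of_hasDerivAt (fun s _ => hydd s)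
      (hgc.intervalIntegrable 0 t)
  have hee : Real.exp (-t / m) * Real.exp (t / m) = 1 := by
    rw [← Real.exp_add, show -t / m + t / m = 0 by ring, Real.exp_zero]
  have hxt : x t = Real.exp (-t / m) * (Real.exp (0 / m) * x 0 + ∫ s in (0:ℝ)..t, g s) := by
    rw [hFTC, show Real.exp (0 / m) * x 0 + (Real.exp (t / m) * x t - Real.exp (0 / m) * x 0)
      = Real.exp (t / m) * x t from by ring, ← mul_assoc, hee, one_mul]
  rw [hxt, abs_mul, abs_of_pos (Real.exp_pos _)]
  refine mul_le_mul_of_nonneg_left ?_ (Real.exp_pos _).le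
  calc |Real.exp (0 / m) * x 0 + ∫ s in (0:ℝ)..t, g s|
      ≤ |Real.exp (0 / m) * x 0| + |∫ s in (0:ℝ)..t, g s| := abs_add_le _ _
    _ ≤ |x 0| + (1 / m) * ∫ s in (0:ℝ)..t, Real.exp (s / m) * φ s := by
        refine add_le_add (by simp [abs_mul]) ?_
        calc |∫ s in (0:ℝ)..t, g s| ≤ ∫ s in (0:ℝ)..t, |g s| :=
              intervalIntegral.abs_integral_le_integral_abs ht
          _ ≤ ∫ s in (0:ℝ)..t, (1 / m) * (Real.exp (s / m) * φ s) := by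
              apply intervalIntegral.integral_mono_on ht
                (hgc.abs.intervalIntegrable 0 t)
                ((continuous_const.mul ((Real.continuous_exp.comp
                  (continuous_id.div_const m)).mul hφ)).intervalIntegrable 0 t)
              intro s hs
              rw [hg]
              have hb := h s hs.1
              rw [abs_div, abs_mul, abs_of_pos (Real.exp_pos _), abs_of_pos hm,
                div_le_iff₀ hm]
              calc Real.exp (s / m) * |m * deriv x s + x s| ≤ Real.exp (s / m) * φ s := by
                    gcongr
                _ = 1 / m * (Real.exp (s / m) * φ s) * m := by field_simp
          _ = (1 / m) * ∫ s in (0:ℝ)..t, Real.exp (s / m) * φ s := by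
              rw [← intervalIntegral.integral_const_mul]

/-- ∫₀ᵗ e^{s/m} = m (e^{t/m} - 1) -/
lemma int_exp {m : ℝ} (hm : 0 < m) (t : ℝ) :
    (∫ s in (0:ℝ)..t, Real.exp (s / m)) = m * (Real.exp (t / m) - 1) := by
  have key : ∀ s : ℝ, HasDerivAt (fun s : ℝ => m * Real.exp (s / m)) (Real.exp (s / m)) s := by
    intro s
    have h1 := ((Real.hasDerivAt_exp (s / m)).comp s ((hasDerivAt_id s).div_const m)).const_mul m
    refine h1.congr_deriv ?_
    field_simp
  rw [intervalIntegral.integral_eq_sub_of_hasDerivAt (fun s _ => key s)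
    ((Real.continuous_exp.comp (continuous_id.div_const m)).intervalIntegrable 0 t)]
  simp [mul_sub]

/-- ∫₀ᵗ (1+s/m)^n = (m/(n+1)) ((1+t/m)^{n+1} - 1) -/
lemma int_pow {m : ℝ} (hm : 0 < m) (n : ℕ) (t : ℝ) :
    (∫ s in (0:ℝ)..t, (1 + s / m) ^ n) = (m / (n + 1)) * ((1 + t / m) ^ (n + 1) - 1) := by
  have key : ∀ s : ℝ, HasDerivAt (fun s : ℝ => (m / (n + 1)) * (1 + s / m) ^ (n + 1))
      ((1 + s / m) ^ n) s := by
    intro s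
    have h0 : HasDerivAt (fun s : ℝ => 1 + s / m) (1 / m) s := by
      simpa using ((hasDerivAt_id s).div_const m).const_add 1
    have h1 := (h0.pow (n + 1)).const_mul (m / (n + 1))
    refine h1.congr_deriv ?_
    have hn1 : ((n:ℝ) + 1) ≠ 0 := by positivity
    field_simp
    rw [Nat.add_sub_cancel]; push_cast
    ring
  rw [intervalIntegral.integral_eq_sub_of_hasDerivAt (fun s _ => key s)
    (((continuous_const.add (continuous_id.div_const m)).pow n).intervalIntegrable 0 t)]
  ring

lemma perterm {A B u e c : ℝ} (hB : 0 ≤ B) (hBA : B ≤ A) (hu : 1 ≤ u)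
    (he : 0 ≤ e) (hc : 0 ≤ c) (hec : e + c = 1) (k j : ℕ) :
    (A ^ k * u ^ k * e * (1 + k * c) + B ^ k * c) *
      (A ^ (j + 1) * u ^ (j + 1) * e + B ^ (j + 1) * c)
      ≤ A ^ (k + (j + 1)) * u ^ (k + (j + 1)) * e * (1 + (k + 1) * c)
        + B ^ (k + (j + 1)) * c := by
  have hA : 0 ≤ A := hB.trans hBA
  have hu0 : (0:ℝ) ≤ u := zero_le_one.trans hu
  have hc' : c = 1 - e := by linarith
  subst hc'
  have he1 : e ≤ 1 := by linarith
  have hBAk : B ^ k ≤ A ^ k := pow_le_pow_left₀ hB hBA k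
  have hBAj : B ^ (j + 1) ≤ A ^ (j + 1) := pow_le_pow_left₀ hB hBA _
  have hvk : (1:ℝ) ≤ u ^ k := one_le_pow₀ hu
  have hvj : (1:ℝ) ≤ u ^ (j + 1) := one_le_pow₀ hu
  have h1 : B ^ (j + 1) ≤ A ^ (j + 1) * u ^ (j + 1) :=
    hBAj.trans (le_mul_of_one_le_right (pow_nonneg hA _) hvj)
  have h2 : B ^ k ≤ A ^ k * u ^ k :=
    hBAk.trans (le_mul_of_one_le_right (pow_nonneg hA _) hvk)
  have hpA : A ^ (k + (j + 1)) = A ^ k * A ^ (j + 1) := pow_add A k (j+1)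
  have hpB : B ^ (k + (j + 1)) = B ^ k * B ^ (j + 1) := pow_add B k (j+1)
  have hpU : u ^ (k + (j + 1)) = u ^ k * u ^ (j + 1) := pow_add u k (j+1)
  rw [hpA, hpB, hpU]
  have hkc : (0:ℝ) ≤ 1 + k * (1 - e) := by nlinarith
  have t1 : 0 ≤ (1 - e) * e * (1 + k * (1 - e)) * (A ^ k) * (u ^ k) *
      (A ^ (j+1) * u ^ (j+1) - B ^ (j+1)) := by
    have := sub_nonneg.mpr h1
    positivity
  have t2 : 0 ≤ (1 - e) * e * (A ^ (j+1)) * (u ^ (j+1)) * (A ^ k * u ^ k - B ^ k) := by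
    have := sub_nonneg.mpr h2
    positivity
  have t3 : 0 ≤ (B ^ k) * (B ^ (j+1)) * (1 - e) * e := by positivity
  nlinarith [t1, t2, t3]

lemma gauss_sum (n : ℕ) : ∑ k ∈ Finset.range (n + 1), ((k : ℝ) + 1)
    = (n + 1) * (n + 2) / 2 := by
  induction n with
  | zero => norm_num
  | succ n ih => rw [Finset.sum_range_succ, ih]; push_cast; ring

lemma sum_bound {A B u e c : ℝ} (hB : 0 ≤ B) (hBA : B ≤ A) (hu : 1 ≤ u)
    (he : 0 ≤ e) (hc : 0 ≤ c) (hec : e + c = 1) (n : ℕ) (F G : ℕ → ℝ)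
    (hF0 : ∀ k, 0 ≤ F k) (hG0 : ∀ k, 0 ≤ G k)
    (hF : ∀ k, k ≤ n → F k ≤ (k.factorial : ℝ) * (A ^ k * u ^ k * e * (1 + k * c) + B ^ k * c))
    (hG : ∀ j, j ≤ n → G j ≤ (j.factorial : ℝ) *
      (A ^ (j + 1) * u ^ (j + 1) * e + B ^ (j + 1) * c)) :
    ∑ k ∈ Finset.range (n + 1), (n.choose k : ℝ) * F k * G (n - k)
      ≤ ((n + 1).factorial : ℝ) *
        (A ^ (n + 1) * u ^ (n + 1) * e * (1 + (n + 1) * c) + B ^ (n + 1) * c) := by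
  have hA : 0 ≤ A := hB.trans hBA
  have hu0 : (0:ℝ) ≤ u := zero_le_one.trans hu
  have step1 : ∑ k ∈ Finset.range (n + 1), (n.choose k : ℝ) * F k * G (n - k)
      ≤ ∑ k ∈ Finset.range (n + 1), (n.factorial : ℝ) *
          (A ^ (n+1) * u ^ (n+1) * e * (1 + (k + 1) * c) + B ^ (n+1) * c) := by
    apply Finset.sum_le_sum
    intro k hk
    have hkn : k ≤ n := Finset.mem_range_succ_iff.mp hk
    have hFG : F k * G (n - k) ≤
        ((k.factorial : ℝ) * (A ^ k * u ^ k * e * (1 + k * c) + B ^ k * c)) *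
        (((n-k).factorial : ℝ) * (A ^ (n-k+1) * u ^ (n-k+1) * e + B ^ (n-k+1) * c)) := by
      apply mul_le_mul (hF k hkn) (hG (n-k) (by omega)) (hG0 _)
      positivity
    have hchain : (n.choose k : ℝ) * F k * G (n - k) ≤ (n.choose k : ℝ) *
        (((k.factorial : ℝ) * (A ^ k * u ^ k * e * (1 + k * c) + B ^ k * c)) *
        (((n-k).factorial : ℝ) * (A ^ (n-k+1) * u ^ (n-k+1) * e + B ^ (n-k+1) * c))) := by
      rw [mul_assoc]
      exact mul_le_mul_of_nonneg_left hFG (by positivity)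
    refine hchain.trans ?_
    have hfact : (n.choose k : ℝ) * (k.factorial : ℝ) * ((n-k).factorial : ℝ)
        = (n.factorial : ℝ) := by
      exact_mod_cast congrArg (Nat.cast (R := ℝ)) (Nat.choose_mul_factorial_mul_factorial hkn)
    have hpt := perterm hB hBA hu he hc hec k (n - k)
    rw [show k + (n - k + 1) = n + 1 from by omega] at hpt
    calc (n.choose k : ℝ) *
        (((k.factorial : ℝ) * (A ^ k * u ^ k * e * (1 + k * c) + B ^ k * c)) *
        (((n-k).factorial : ℝ) * (A ^ (n-k+1) * u ^ (n-k+1) * e + B ^ (n-k+1) * c)))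
        = ((n.choose k : ℝ) * (k.factorial : ℝ) * ((n-k).factorial : ℝ)) *
          ((A ^ k * u ^ k * e * (1 + k * c) + B ^ k * c) *
           (A ^ (n-k+1) * u ^ (n-k+1) * e + B ^ (n-k+1) * c)) := by ring
      _ = (n.factorial : ℝ) * ((A ^ k * u ^ k * e * (1 + k * c) + B ^ k * c) *
           (A ^ (n-k+1) * u ^ (n-k+1) * e + B ^ (n-k+1) * c)) := by rw [hfact]
      _ ≤ (n.factorial : ℝ) *
          (A ^ (n+1) * u ^ (n+1) * e * (1 + (k + 1) * c) + B ^ (n+1) * c) := by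
          exact mul_le_mul_of_nonneg_left hpt (by positivity)
  refine step1.trans ?_
  have expand : ∑ k ∈ Finset.range (n + 1), (n.factorial : ℝ) *
      (A ^ (n+1) * u ^ (n+1) * e * (1 + (k + 1) * c) + B ^ (n+1) * c)
      = ∑ k ∈ Finset.range (n + 1),
        ((n.factorial : ℝ) * (A ^ (n+1) * u ^ (n+1) * e + B ^ (n+1) * c)
         + ((n.factorial : ℝ) * (A ^ (n+1) * u ^ (n+1) * e) * c) * ((k:ℝ) + 1)) := by
    apply Finset.sum_congr rfl
    intro k _
    ring
  rw [expand, Finset.sum_add_distrib, Finset.sum_const, Finset.card_range,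
    ← Finset.mul_sum, gauss_sum, nsmul_eq_mul]
  have hfs : ((n+1).factorial : ℝ) = ((n:ℝ) + 1) * (n.factorial : ℝ) := by
    rw [Nat.factorial_succ]; push_cast; ring
  rw [hfs]
  have hP : (0:ℝ) ≤ (n.factorial : ℝ) * (A ^ (n+1) * u ^ (n+1) * e) := by positivity
  push_cast
  nlinarith [mul_nonneg (mul_nonneg hP hc) (by positivity : (0:ℝ) ≤ (n:ℝ))]
lemma sincos {A B u e c : ℝ} (hB : 0 ≤ B) (hBA : B ≤ A) (hu : 1 ≤ u)
    (he : 0 ≤ e) (hc : 0 ≤ c) (hec : e + c = 1) :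
    ∀ n : ℕ, ∀ ψ : ℝ → ℝ, Sm ψ → ∀ t : ℝ,
      (∀ l : ℕ, 1 ≤ l → l ≤ n → |iteratedDeriv l ψ t| ≤
        (Nat.factorial (l - 1) : ℝ) * (A ^ l * u ^ l * e + B ^ l * c)) →
      |iteratedDeriv n (fun s => Real.sin (ψ s)) t| ≤
        (n.factorial : ℝ) * (A ^ n * u ^ n * e * (1 + n * c) + B ^ n * c) ∧
      |iteratedDeriv n (fun s => Real.cos (ψ s)) t| ≤
        (n.factorial : ℝ) * (A ^ n * u ^ n * e * (1 + n * c) + B ^ n * c) := by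
  intro n
  induction n using Nat.strong_induction_on with
  | _ n IH =>
    match n with
    | 0 =>
      intro ψ hψ t _
      constructor
      · rw [iteratedDeriv_zero]
        refine le_trans (abs_le.mpr ⟨Real.neg_one_le_sin _, Real.sin_le_one _⟩) (le_of_eq ?_)
        push_cast; norm_num; linarith
      · rw [iteratedDeriv_zero]
        refine le_trans (abs_le.mpr ⟨Real.neg_one_le_cos _, Real.cos_le_one _⟩) (le_of_eq ?_)
        push_cast; norm_num; linarith
    | (n + 1) =>
      intro ψ hψ t hd
      have hψd : Differentiable ℝ ψ := hψ.diffb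
      have hsinSm : Sm (fun s => Real.sin (ψ s)) := Real.contDiff_sin.comp hψ
      have hcosSm : Sm (fun s => Real.cos (ψ s)) := Real.contDiff_cos.comp hψ
      have IHk : ∀ k, k ≤ n →
          |iteratedDeriv k (fun s => Real.sin (ψ s)) t| ≤
            (k.factorial : ℝ) * (A ^ k * u ^ k * e * (1 + k * c) + B ^ k * c) ∧
          |iteratedDeriv k (fun s => Real.cos (ψ s)) t| ≤
            (k.factorial : ℝ) * (A ^ k * u ^ k * e * (1 + k * c) + B ^ k * c) :=
        fun k hk => IH k (by omega) ψ hψ t (fun l h1 h2 => hd l h1 (by omega))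
      have hGb : ∀ j : ℕ, j ≤ n → |iteratedDeriv j (deriv ψ) t| ≤ ((j.factorial : ℝ)) *
          (A ^ (j + 1) * u ^ (j + 1) * e + B ^ (j + 1) * c) := by
        intro j hj
        rw [← iteratedDeriv_succ']
        have := hd (j + 1) (by omega) (by omega)
        simpa using this
      constructor
      · have hder : deriv (fun s => Real.sin (ψ s)) = fun s => Real.cos (ψ s) * deriv ψ s := by
          funext s
          exact ((Real.hasDerivAt_sin (ψ s)).comp s (hψd s).hasDerivAt).deriv
        rw [iteratedDeriv_succ', hder]
        refine (itd_mul_bound hcosSm hψ.deriv' n t).trans ?_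
        refine (sum_bound hB hBA hu he hc hec n
          (fun k => |iteratedDeriv k (fun s => Real.cos (ψ s)) t|)
          (fun j => |iteratedDeriv j (deriv ψ) t|)
          (fun k => abs_nonneg _) (fun j => abs_nonneg _)
          (fun k hk => (IHk k hk).2) hGb).trans (le_of_eq (by push_cast; ring))
      · have hder : deriv (fun s => Real.cos (ψ s)) = fun s => -Real.sin (ψ s) * deriv ψ s := by
          funext s
          exact ((Real.hasDerivAt_cos (ψ s)).comp s (hψd s).hasDerivAt).deriv
        rw [iteratedDeriv_succ', hder]
        have hmb := itd_mul_bound (f := fun s => -Real.sin (ψ s)) (g := deriv ψ)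
          (Real.contDiff_sin.comp hψ).neg hψ.deriv' n t
        refine hmb.trans ?_
        have habs : ∀ k, |iteratedDeriv k (fun s => -Real.sin (ψ s)) t|
            = |iteratedDeriv k (fun s => Real.sin (ψ s)) t| := by
          intro k
          rw [show (fun s => -Real.sin (ψ s)) = -(fun s => Real.sin (ψ s)) from rfl, iteratedDeriv_neg, abs_neg]
        refine le_trans (le_of_eq (Finset.sum_congr rfl fun k _ => by rw [habs]))
          ((sum_bound hB hBA hu he hc hec n
          (fun k => |iteratedDeriv k (fun s => Real.sin (ψ s)) t|)
          (fun j => |iteratedDeriv j (deriv ψ) t|)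
          (fun k => abs_nonneg _) (fun j => abs_nonneg _)
          (fun k hk => (IHk k hk).1) hGb).trans (le_of_eq (by push_cast; ring)))

end Stmt19Aux
open Stmt19Aux in
set_option maxHeartbeats 4000000 in
/-- Lemma B.4: relative derivative bounds for the inertial Kuramoto flow. -/
theorem stmt19 (N : ℕ) (hN : 1 ≤ N) (θ0 ω0 ν : Fin N → ℝ) (κ m : ℝ)
    (hκ : 0 < κ) (hm : 0 < m)
    (θ : Fin N → ℝ → ℝ)
    (hθ : IsInertialSol N m κ ν θ0 ω0 θ) :
    ∀ n : ℕ, 1 ≤ n → ∀ i j, ∀ t : ℝ, 0 ≤ t →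
      |iteratedDeriv n (θ i) t - iteratedDeriv n (θ j) t| ≤
        (Nat.factorial (n - 1) : ℝ) *
          ((2 * κ + (⨆ i', ⨆ j', |ω0 i' - ω0 j'|) + (⨆ i', ⨆ j', |ν i' - ν j'|) +
              9 / (8 * m)) ^ n * (1 + t / m) ^ n * Real.exp (-t / m) +
            (2 * κ + (⨆ i', ⨆ j', |ν i' - ν j'|)) ^ n * (1 - Real.exp (-t / m))) := by
  obtain ⟨hsm0, hinit, hvel, hode⟩ := hθ
  have hs : ∀ i, Sm (θ i) := fun i => (hsm0 i).of_le (by simp)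
  haveI hne : Nonempty (Fin N) := ⟨⟨0, hN⟩⟩
  set D0 := (⨆ i', ⨆ j', |ω0 i' - ω0 j'|) with hD0def
  set DV := (⨆ i', ⨆ j', |ν i' - ν j'|) with hDVdef
  set A := 2 * κ + D0 + DV + 9 / (8 * m) with hAdef
  set B := 2 * κ + DV with hBdef
  -- basic facts about D0, DV
  have hD0b : ∀ i j, |ω0 i - ω0 j| ≤ D0 := by
    intro i j
    exact le_trans
      (le_ciSup (f := fun j' => |ω0 i - ω0 j'|) (Set.Finite.bddAbove (Set.finite_range _)) j)
      (le_ciSup (f := fun i' => ⨆ j', |ω0 i' - ω0 j'|)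
        (Set.Finite.bddAbove (Set.finite_range _)) i)
  have hDVb : ∀ i j, |ν i - ν j| ≤ DV := by
    intro i j
    exact le_trans
      (le_ciSup (f := fun j' => |ν i - ν j'|) (Set.Finite.bddAbove (Set.finite_range _)) j)
      (le_ciSup (f := fun i' => ⨆ j', |ν i' - ν j'|)
        (Set.Finite.bddAbove (Set.finite_range _)) i)
  have hD0nn : 0 ≤ D0 :=
    le_trans (abs_nonneg _) (hD0b (Classical.arbitrary _) (Classical.arbitrary _))
  have hDVnn : 0 ≤ DV :=
    le_trans (abs_nonneg _) (hDVb (Classical.arbitrary _) (Classical.arbitrary _))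
  have h98 : 0 < 9 / (8 * m) := by positivity
  have hBpos : 0 < B := by rw [hBdef]; linarith
  have hBA : B ≤ A := by rw [hAdef, hBdef]; linarith
  have hApos : 0 < A := lt_of_lt_of_le hBpos hBA
  have h2κA : 2 * κ ≤ A := by rw [hAdef]; linarith
  have h2κB : 2 * κ ≤ B := by rw [hBdef]; linarith
  have hD0A : D0 ≤ A := by rw [hAdef]; linarith
  have hinvm : 1 / m ≤ 8 / 9 * A := by
    have h9A : 9 / (8 * m) ≤ A := by rw [hAdef]; linarith
    have : 1 / m = 8 / 9 * (9 / (8 * m)) := by field_simp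
    rw [this]
    nlinarith
  have hBeq : DV + κ * 2 = B := by rw [hBdef]; ring
  have hDVκD0A : DV + κ * 2 + D0 ≤ A := by rw [hAdef]; linarith
  clear hAdef hBdef
  clear_value A B
  have hexp1 : ∀ t : ℝ, 0 ≤ t → Real.exp (-t / m) ≤ 1 := by
    intro t ht
    have h1 : -t / m ≤ 0 := by
      have := div_nonneg ht hm.le
      rw [neg_div]
      linarith
    calc Real.exp (-t / m) ≤ Real.exp 0 := Real.exp_le_exp.mpr h1
      _ = 1 := Real.exp_zero
  have hu1 : ∀ t : ℝ, 0 ≤ t → 1 ≤ 1 + t / m := by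
    intro t ht
    have := div_nonneg ht hm.le
    linarith
  -- the coupling term
  set S : Fin N → ℝ → ℝ := fun i t => κ / N * ∑ k, Real.sin (θ k t - θ i t) with hSdef
  have hSsm : ∀ i, Sm (S i) := fun i =>
    contDiff_const.mul (ContDiff.sum fun k _ => Real.contDiff_sin.comp ((hs k).sub (hs i)))
  have hode' : ∀ i, ∀ t : ℝ, 0 ≤ t →
      m * deriv (deriv (θ i)) t + deriv (θ i) t = ν i + S i t := fun i t ht => hode i t ht
  -- the iterated ODE for derivatives of order ≥ 1
  have hiter : ∀ i, ∀ r : ℕ, 1 ≤ r → ∀ t : ℝ, 0 ≤ t →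
      m * iteratedDeriv (r+2) (θ i) t + iteratedDeriv (r+1) (θ i) t
        = iteratedDeriv r (S i) t := by
    intro i r hr t ht
    have hfSm : Sm (fun t => m * deriv (deriv (θ i)) t + deriv (θ i) t) :=
      (contDiff_const.mul (hs i).deriv'.deriv').add (hs i).deriv'
    have hgSm : Sm (fun t => ν i + S i t) := contDiff_const.add (hSsm i)
    have hfg := itd_eqOn_Ici hfSm hgSm (fun s hs' => hode' i s hs') r t ht
    have eL : iteratedDeriv r (fun t => m * deriv (deriv (θ i)) t + deriv (θ i) t) t
        = m * iteratedDeriv (r+2) (θ i) t + iteratedDeriv (r+1) (θ i) t := by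
      rw [itd_add (contDiff_const.mul (hs i).deriv'.deriv') (hs i).deriv' r t,
        itd_const_mul (hs i).deriv'.deriv' m r t]
      have e2 : iteratedDeriv (r+2) (θ i) = iteratedDeriv r (deriv (deriv (θ i))) := by
        rw [iteratedDeriv_succ', iteratedDeriv_succ']
      have e1 : iteratedDeriv (r+1) (θ i) = iteratedDeriv r (deriv (θ i)) :=
        iteratedDeriv_succ'
      rw [e2, e1]
    have eR : iteratedDeriv r (fun t => ν i + S i t) t = iteratedDeriv r (S i) t :=
      itd_const_add (ν i) hr t
    calc m * iteratedDeriv (r+2) (θ i) t + iteratedDeriv (r+1) (θ i) t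
        = iteratedDeriv r (fun t => m * deriv (deriv (θ i)) t + deriv (θ i) t) t := eL.symm
      _ = iteratedDeriv r (fun t => ν i + S i t) t := hfg
      _ = iteratedDeriv r (S i) t := eR
  -- difference of S as sum of sin-compositions
  have hSsin : ∀ i', Sm (fun t => ∑ k, Real.sin (θ k t - θ i' t)) := fun i' =>
    ContDiff.sum fun k _ => Real.contDiff_sin.comp ((hs k).sub (hs i'))
  have hSdiff : ∀ i j, ∀ r : ℕ, ∀ t : ℝ,
      iteratedDeriv r (S i) t - iteratedDeriv r (S j) t
        = κ / N * ∑ k, (iteratedDeriv r (fun s => Real.sin (θ k s - θ i s)) t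
            - iteratedDeriv r (fun s => Real.sin (θ k s - θ j s)) t) := by
    intro i j r t
    have hexp : ∀ i', iteratedDeriv r (S i') t
        = κ / N * ∑ k, iteratedDeriv r (fun s => Real.sin (θ k s - θ i' s)) t := by
      intro i'
      have h1 : S i' = fun t => κ / N * ∑ k, Real.sin (θ k t - θ i' t) := rfl
      rw [h1, itd_const_mul (hSsin i') (κ / N) r t,
        itd_sum Finset.univ (fun k => fun s => Real.sin (θ k s - θ i' s))
          (fun k _ => Real.contDiff_sin.comp ((hs k).sub (hs i'))) r t]
    rw [hexp i, hexp j, ← mul_sub, ← Finset.sum_sub_distrib]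
  -- |S i s - S j s| ≤ 2κ
  have hS2 : ∀ i j, ∀ s : ℝ, |S i s - S j s| ≤ κ * 2 := by
    intro i j s
    have hrw : S i s - S j s
        = κ / N * ∑ k, (Real.sin (θ k s - θ i s) - Real.sin (θ k s - θ j s)) := by
      rw [← mul_sub, ← Finset.sum_sub_distrib]
    rw [hrw]
    apply kappa_sum_bound hN hκ.le
    intro k
    calc |Real.sin (θ k s - θ i s) - Real.sin (θ k s - θ j s)|
        ≤ |Real.sin (θ k s - θ i s)| + |Real.sin (θ k s - θ j s)| := abs_sub _ _
      _ ≤ 1 + 1 := add_le_add (Real.abs_sin_le_one _) (Real.abs_sin_le_one _)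
      _ = 2 := by norm_num
  -- the main strong induction
  have key : ∀ n : ℕ, 1 ≤ n →
      (∀ i j, |iteratedDeriv n (θ i) 0 - iteratedDeriv n (θ j) 0|
          ≤ (Nat.factorial (n - 1) : ℝ) * A ^ n) ∧
      (∀ i j, ∀ t : ℝ, 0 ≤ t →
          |iteratedDeriv n (θ i) t - iteratedDeriv n (θ j) t|
            ≤ (Nat.factorial (n - 1) : ℝ) *
              (A ^ n * (1 + t / m) ^ n * Real.exp (-t / m)
                + B ^ n * (1 - Real.exp (-t / m)))) := by
    intro n
    induction n using Nat.strong_induction_on with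
    | _ n IH =>
      match n with
      | 0 => intro hn; exact absurd hn (by omega)
      | 1 =>
        intro _
        constructor
        · intro i j
          have hrw : iteratedDeriv 1 (θ i) 0 - iteratedDeriv 1 (θ j) 0 = ω0 i - ω0 j := by
            rw [iteratedDeriv_one, iteratedDeriv_one, hvel i, hvel j]
          rw [hrw]
          calc |ω0 i - ω0 j| ≤ D0 := hD0b i j
            _ ≤ (Nat.factorial (1 - 1) : ℝ) * A ^ 1 := by
                simp [Nat.factorial]
                linarith
        · intro i j t ht
          set x : ℝ → ℝ := fun s => deriv (θ i) s - deriv (θ j) s with hxdef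
          have hxSm : Sm x := (hs i).deriv'.sub ((hs j).deriv')
          have hb : ∀ s : ℝ, 0 ≤ s → |m * deriv x s + x s| ≤ B := by
            intro s hs'
            have hdx : deriv x s = deriv (deriv (θ i)) s - deriv (deriv (θ j)) s := by
              rw [hxdef]
              exact deriv_sub ((hs i).deriv'.diffb s) ((hs j).deriv'.diffb s)
            have hxs : x s = deriv (θ i) s - deriv (θ j) s := rfl
            have hi := hode' i s hs'
            have hj := hode' j s hs'
            have hex : m * deriv x s + x s = (ν i - ν j) + (S i s - S j s) := by
              rw [hdx, hxs]
              linear_combination hi - hj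
            rw [hex]
            calc |(ν i - ν j) + (S i s - S j s)|
                ≤ |ν i - ν j| + |S i s - S j s| := abs_add_le _ _
              _ ≤ DV + κ * 2 := add_le_add (hDVb i j) (hS2 i j s)
              _ = B := hBeq
          have hob := ode_bound hm x (fun _ => B) hxSm continuous_const hb t ht
          have hint : (∫ s in (0:ℝ)..t, Real.exp (s / m) * B)
              = B * (m * (Real.exp (t / m) - 1)) := by
            rw [intervalIntegral.integral_mul_const, int_exp hm]; ring
          rw [hint] at hob
          have hsimp : (1 / m) * (B * (m * (Real.exp (t / m) - 1)))
              = B * (Real.exp (t / m) - 1) := by field_simp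
          rw [hsimp] at hob
          have hx0 : |x 0| ≤ D0 := by
            have hx00 : x 0 = ω0 i - ω0 j := by
              show deriv (θ i) 0 - deriv (θ j) 0 = ω0 i - ω0 j
              rw [hvel i, hvel j]
            rw [hx00]; exact hD0b i j
          have hrw : iteratedDeriv 1 (θ i) t - iteratedDeriv 1 (θ j) t = x t := by
            rw [iteratedDeriv_one, iteratedDeriv_one]
          rw [hrw]
          have he0 : (0:ℝ) ≤ Real.exp (-t / m) := (Real.exp_pos _).le
          have heeB : B * (Real.exp (-t / m) * Real.exp (t / m)) = B := by
            rw [← Real.exp_add, show -t / m + t / m = 0 by ring, Real.exp_zero, mul_one]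
          have hAu : A ≤ A * (1 + t / m) := le_mul_of_one_le_right hApos.le (hu1 t ht)
          have t1 : Real.exp (-t / m) * |x 0| ≤ Real.exp (-t / m) * D0 :=
            mul_le_mul_of_nonneg_left hx0 he0
          have t2 : 0 ≤ Real.exp (-t / m) * (A * (1 + t / m) - D0) :=
            mul_nonneg he0 (by linarith)
          have hfact1 : (Nat.factorial (1 - 1) : ℝ) = 1 := by norm_num [Nat.factorial]
          rw [hfact1]
          nlinarith [hob, t1, t2, heeB]
      | (r + 2) =>
        intro _
        -- bound at t = 0 for sin-compositions of order r, from strong IH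
        have hsin0 : ∀ (a b : Fin N),
            |iteratedDeriv r (fun y => Real.sin (θ a y - θ b y)) 0|
              ≤ (r.factorial : ℝ) * A ^ r := by
          intro a b
          have hd : ∀ l : ℕ, 1 ≤ l → l ≤ r →
              |iteratedDeriv l (fun s => θ a s - θ b s) 0| ≤
                (Nat.factorial (l - 1) : ℝ) * (A ^ l * 1 ^ l * 1 + B ^ l * 0) := by
            intro l hl1 hlr
            rw [itd_sub (hs a) (hs b) l 0]
            refine le_trans ((IH l (by omega) hl1).1 a b) (le_of_eq ?_)
            simp
          have hcon := (sincos hBpos.le hBA le_rfl zero_le_one le_rfl (by ring)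
            r (fun s => θ a s - θ b s) ((hs a).sub (hs b)) 0 hd).1
          refine le_trans hcon (le_of_eq ?_)
          simp
        -- bound at general time for sin-compositions of order r+1, from strong IH
        have hsin_t : ∀ (a b : Fin N) (s : ℝ), 0 ≤ s →
            |iteratedDeriv (r+1) (fun y => Real.sin (θ a y - θ b y)) s|
              ≤ ((r+1).factorial : ℝ) *
                (A ^ (r+1) * (1 + s / m) ^ (r+1) * Real.exp (-s / m) *
                    (1 + ((r+1 : ℕ) : ℝ) * (1 - Real.exp (-s / m)))
                  + B ^ (r+1) * (1 - Real.exp (-s / m))) := by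
          intro a b s hs'
          have hd : ∀ l : ℕ, 1 ≤ l → l ≤ r + 1 →
              |iteratedDeriv l (fun y => θ a y - θ b y) s| ≤
                (Nat.factorial (l - 1) : ℝ) *
                  (A ^ l * (1 + s / m) ^ l * Real.exp (-s / m)
                    + B ^ l * (1 - Real.exp (-s / m))) := by
            intro l hl1 hlr
            rw [itd_sub (hs a) (hs b) l s]
            exact (IH l (by omega) hl1).2 a b s hs'
          exact (sincos hBpos.le hBA (hu1 s hs') (Real.exp_pos _).le
            (by linarith [hexp1 s hs']) (by ring) (r+1)
            (fun y => θ a y - θ b y) ((hs a).sub (hs b)) s hd).1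
        -- the bound at t = 0 of order r+2
        have hQ : ∀ i j, |iteratedDeriv (r+2) (θ i) 0 - iteratedDeriv (r+2) (θ j) 0|
            ≤ (Nat.factorial (r + 2 - 1) : ℝ) * A ^ (r+2) := by
          intro i j
          rcases Nat.eq_zero_or_pos r with hr0 | hrpos
          · -- r = 0 : use the raw ODE at time 0
            subst hr0
            have hi := hode' i 0 le_rfl
            have hj := hode' j 0 le_rfl
            have c2 : ∀ a : Fin N, iteratedDeriv 2 (θ a) 0 = deriv (deriv (θ a)) 0 := by
              intro a; rw [iteratedDeriv_succ, iteratedDeriv_one]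
            have hmx : m * (iteratedDeriv 2 (θ i) 0 - iteratedDeriv 2 (θ j) 0)
                = (ν i - ν j) + (S i 0 - S j 0) - (deriv (θ i) 0 - deriv (θ j) 0) := by
              rw [c2 i, c2 j]
              linear_combination hi - hj
            have habs : m * |iteratedDeriv 2 (θ i) 0 - iteratedDeriv 2 (θ j) 0|
                ≤ DV + κ * 2 + D0 := by
              rw [← abs_of_pos hm, ← abs_mul, hmx]
              have hvel' : |deriv (θ i) 0 - deriv (θ j) 0| ≤ D0 := by
                rw [hvel i, hvel j]; exact hD0b i j
              calc |(ν i - ν j) + (S i 0 - S j 0) - (deriv (θ i) 0 - deriv (θ j) 0)|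
                  ≤ |(ν i - ν j) + (S i 0 - S j 0)| + |deriv (θ i) 0 - deriv (θ j) 0| :=
                    abs_sub _ _
                _ ≤ (|ν i - ν j| + |S i 0 - S j 0|) + |deriv (θ i) 0 - deriv (θ j) 0| :=
                    add_le_add_left (abs_add_le _ _) _
                _ ≤ (DV + κ * 2) + D0 :=
                    add_le_add (add_le_add (hDVb i j) (hS2 i j 0)) hvel'
            have hX : |iteratedDeriv 2 (θ i) 0 - iteratedDeriv 2 (θ j) 0|
                ≤ (DV + κ * 2 + D0) * (1 / m) := by
              rw [mul_comm] at habs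
              rw [mul_one_div, le_div_iff₀ hm]
              exact habs
            have hcA : DV + κ * 2 + D0 ≤ A := hDVκD0A
            have hfin : (DV + κ * 2 + D0) * (1 / m) ≤ A * (8 / 9 * A) := by
              apply mul_le_mul hcA hinvm (by positivity) hApos.le
            refine (hX.trans (hfin.trans ?_))
            have : (Nat.factorial (0 + 2 - 1) : ℝ) = 1 := by norm_num [Nat.factorial]
            rw [this]
            nlinarith [sq_nonneg A]
          · -- r ≥ 1 : use the iterated ODE at time 0
            have hi := hiter i r hrpos 0 le_rfl
            have hj := hiter j r hrpos 0 le_rfl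
            have hmx : m * (iteratedDeriv (r+2) (θ i) 0 - iteratedDeriv (r+2) (θ j) 0)
                = (iteratedDeriv r (S i) 0 - iteratedDeriv r (S j) 0)
                  - (iteratedDeriv (r+1) (θ i) 0 - iteratedDeriv (r+1) (θ j) 0) := by
              linear_combination hi - hj
            have hFb : |iteratedDeriv r (S i) 0 - iteratedDeriv r (S j) 0|
                ≤ κ * (2 * ((r.factorial : ℝ) * A ^ r)) := by
              rw [hSdiff i j r 0]
              apply kappa_sum_bound hN hκ.le
              intro k
              calc |iteratedDeriv r (fun s => Real.sin (θ k s - θ i s)) 0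
                    - iteratedDeriv r (fun s => Real.sin (θ k s - θ j s)) 0|
                  ≤ |iteratedDeriv r (fun s => Real.sin (θ k s - θ i s)) 0|
                    + |iteratedDeriv r (fun s => Real.sin (θ k s - θ j s)) 0| := abs_sub _ _
                _ ≤ 2 * ((r.factorial : ℝ) * A ^ r) := by
                    have b1 := hsin0 k i
                    have b2 := hsin0 k j
                    linarith
            have hdprev : |iteratedDeriv (r+1) (θ i) 0 - iteratedDeriv (r+1) (θ j) 0|
                ≤ (r.factorial : ℝ) * A ^ (r+1) := by
              have := (IH (r+1) (by omega) (by omega)).1 i j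
              simpa using this
            have habs : m * |iteratedDeriv (r+2) (θ i) 0 - iteratedDeriv (r+2) (θ j) 0|
                ≤ κ * (2 * ((r.factorial : ℝ) * A ^ r)) + (r.factorial : ℝ) * A ^ (r+1) := by
              rw [← abs_of_pos hm, ← abs_mul, hmx]
              calc |(iteratedDeriv r (S i) 0 - iteratedDeriv r (S j) 0)
                    - (iteratedDeriv (r+1) (θ i) 0 - iteratedDeriv (r+1) (θ j) 0)|
                  ≤ |iteratedDeriv r (S i) 0 - iteratedDeriv r (S j) 0|
                    + |iteratedDeriv (r+1) (θ i) 0 - iteratedDeriv (r+1) (θ j) 0| := abs_sub _ _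
                _ ≤ _ := add_le_add hFb hdprev
            have hX : |iteratedDeriv (r+2) (θ i) 0 - iteratedDeriv (r+2) (θ j) 0|
                ≤ (κ * (2 * ((r.factorial : ℝ) * A ^ r)) + (r.factorial : ℝ) * A ^ (r+1))
                  * (1 / m) := by
              rw [mul_comm] at habs
              rw [mul_one_div, le_div_iff₀ hm]
              exact habs
            have hfr : (0:ℝ) ≤ (r.factorial : ℝ) := by positivity
            have hc2 : κ * (2 * ((r.factorial : ℝ) * A ^ r)) + (r.factorial : ℝ) * A ^ (r+1)
                ≤ (r.factorial : ℝ) * A ^ r * (2 * A) := by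
              have hP : (0:ℝ) ≤ (r.factorial : ℝ) * A ^ r := by positivity
              have e1 : (r.factorial : ℝ) * A ^ (r+1) = (r.factorial : ℝ) * A ^ r * A := by
                ring
              nlinarith [hP]
            have hfin : (κ * (2 * ((r.factorial : ℝ) * A ^ r)) + (r.factorial : ℝ) * A ^ (r+1))
                  * (1 / m)
                ≤ ((r.factorial : ℝ) * A ^ r * (2 * A)) * (8 / 9 * A) := by
              apply mul_le_mul hc2 hinvm (by positivity) (by positivity)
            refine hX.trans (hfin.trans ?_)
            have hr1 : (1:ℝ) ≤ (r:ℝ) := by exact_mod_cast hrpos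
            have hfacteq : (Nat.factorial (r + 2 - 1) : ℝ) = ((r:ℝ) + 1) * (r.factorial : ℝ) := by
              rw [show r + 2 - 1 = r + 1 from rfl, Nat.factorial_succ]
              push_cast
              ring
            rw [hfacteq]
            have hpw : A ^ (r+2) = A ^ r * A * A := by ring
            rw [hpw]
            have hP : (0:ℝ) ≤ (r.factorial : ℝ) * (A ^ r * A * A) := by positivity
            nlinarith [hP, mul_nonneg (sub_nonneg.mpr hr1) hP]
        refine ⟨hQ, ?_⟩
        -- the general-time bound of order r+2
        intro i j t ht
        set x : ℝ → ℝ := fun s =>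
          iteratedDeriv (r+2) (θ i) s - iteratedDeriv (r+2) (θ j) s with hxdef
        have hxSm : Sm x := ((hs i).iterated (r+2)).sub ((hs j).iterated (r+2))
        set f : ℝ := ((r+1).factorial : ℝ) with hfdef
        have hf0 : 0 ≤ f := by rw [hfdef]; positivity
        set φ : ℝ → ℝ := fun s => 2 * κ * f *
            (((r:ℝ) + 2) * A ^ (r+1) * (1 + s / m) ^ (r+1) * Real.exp (-s / m)
              + B ^ (r+1)) with hφdef
        have hφc : Continuous φ := by
          rw [hφdef]
          have : Continuous fun s : ℝ => Real.exp (-s / m) :=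
            Real.continuous_exp.comp (continuous_id.neg.div_const m)
          fun_prop
        have hb : ∀ s : ℝ, 0 ≤ s → |m * deriv x s + x s| ≤ φ s := by
          intro s hs'
          have hdx : deriv x s
              = iteratedDeriv (r+3) (θ i) s - iteratedDeriv (r+3) (θ j) s := by
            rw [hxdef]
            rw [deriv_fun_sub (((hs i).iterated (r+2)).diffb s) (((hs j).iterated (r+2)).diffb s)]
            rw [← iteratedDeriv_succ, ← iteratedDeriv_succ]
          have hxs : x s = iteratedDeriv (r+2) (θ i) s - iteratedDeriv (r+2) (θ j) s := rfl
          have hi := hiter i (r+1) (by omega) s hs'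
          have hj := hiter j (r+1) (by omega) s hs'
          have hex : m * deriv x s + x s
              = iteratedDeriv (r+1) (S i) s - iteratedDeriv (r+1) (S j) s := by
            rw [hdx, hxs]
            linear_combination hi - hj
          rw [hex, hSdiff i j (r+1) s]
          have hE0 : (0:ℝ) ≤ Real.exp (-s / m) := (Real.exp_pos _).le
          have hE1 : Real.exp (-s / m) ≤ 1 := hexp1 s hs'
          have hkb : ∀ k : Fin N,
              |iteratedDeriv (r+1) (fun y => Real.sin (θ k y - θ i y)) s
                - iteratedDeriv (r+1) (fun y => Real.sin (θ k y - θ j y)) s|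
              ≤ 2 * (f * (A ^ (r+1) * (1 + s / m) ^ (r+1) * Real.exp (-s / m) *
                    (1 + ((r+1 : ℕ) : ℝ) * (1 - Real.exp (-s / m)))
                  + B ^ (r+1) * (1 - Real.exp (-s / m)))) := by
            intro k
            have b1 := hsin_t k i s hs'
            have b2 := hsin_t k j s hs'
            exact le_trans (abs_sub _ _) (by linarith)
          refine le_trans (kappa_sum_bound hN hκ.le _ hkb) ?_
          · -- κ * (2 * bound) ≤ φ s
            simp only [hφdef]
            have t1 : (0:ℝ) ≤ κ * f * (A ^ (r+1) * (1 + s / m) ^ (r+1)) *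
                (Real.exp (-s / m) * Real.exp (-s / m)) * ((r:ℝ) + 1) := by positivity
            have t2 : (0:ℝ) ≤ κ * f * B ^ (r+1) * Real.exp (-s / m) := by positivity
            push_cast
            nlinarith [t1, t2]
        have hob := ode_bound hm x φ hxSm hφc hb t ht
        have hkey : ∀ s : ℝ, Real.exp (s / m) * φ s
            = (2 * κ * f * ((r:ℝ) + 2) * A ^ (r+1)) * (1 + s / m) ^ (r+1)
              + (2 * κ * f * B ^ (r+1)) * Real.exp (s / m) := by
          intro s
          have hee : Real.exp (s / m) * Real.exp (-s / m) = 1 := by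
            rw [← Real.exp_add, show s / m + -s / m = 0 by ring, Real.exp_zero]
          rw [hφdef]
          linear_combination (2 * κ * f * ((r:ℝ) + 2) * A ^ (r+1) * (1 + s / m) ^ (r+1)) * hee
        have hival : (∫ s in (0:ℝ)..t, Real.exp (s / m) * φ s)
            = 2 * κ * f * A ^ (r+1) * m * ((1 + t / m) ^ (r+2) - 1) * ((r:ℝ) + 2) / ((r:ℝ) + 2)
              + 2 * κ * f * B ^ (r+1) * (m * (Real.exp (t / m) - 1)) := by
          simp only [hkey]
          rw [intervalIntegral.integral_add
            ((Continuous.intervalIntegrable (by fun_prop) 0 t))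
            ((Continuous.intervalIntegrable (by fun_prop) 0 t)),
            intervalIntegral.integral_const_mul, intervalIntegral.integral_const_mul,
            int_pow hm (r+1) t, int_exp hm t]
          have hrne : ((r:ℝ) + 1 + 1) ≠ 0 := by positivity
          push_cast
          field_simp
          ring
        have hrne2 : ((r:ℝ) + 2) ≠ 0 := by positivity
        have hival' : (∫ s in (0:ℝ)..t, Real.exp (s / m) * φ s)
            = 2 * κ * f * A ^ (r+1) * m * ((1 + t / m) ^ (r+2) - 1)
              + 2 * κ * f * B ^ (r+1) * (m * (Real.exp (t / m) - 1)) := by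
          rw [hival]
          field_simp
        rw [hival'] at hob
        have hsimp : (1 / m) * (2 * κ * f * A ^ (r+1) * m * ((1 + t / m) ^ (r+2) - 1)
              + 2 * κ * f * B ^ (r+1) * (m * (Real.exp (t / m) - 1)))
            = 2 * κ * f * A ^ (r+1) * ((1 + t / m) ^ (r+2) - 1)
              + 2 * κ * f * B ^ (r+1) * (Real.exp (t / m) - 1) := by
          field_simp
        rw [hsimp] at hob
        -- final arithmetic
        have hgoaleq : iteratedDeriv (r+2) (θ i) t - iteratedDeriv (r+2) (θ j) t = x t := rfl
        rw [hgoaleq]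
        have hq : |x 0| ≤ f * A ^ (r+2) := by
          have := hQ i j
          rw [show r + 2 - 1 = r + 1 from rfl] at this
          rw [hfdef]
          exact this
        have he0 : (0:ℝ) ≤ Real.exp (-t / m) := (Real.exp_pos _).le
        have hE1 : Real.exp (-t / m) ≤ 1 := hexp1 t ht
        have hU1 : (1:ℝ) ≤ (1 + t / m) ^ (r+2) := one_le_pow₀ (hu1 t ht)
        have heeB : 2 * κ * f * B ^ (r+1) * (Real.exp (-t / m) * Real.exp (t / m))
            = 2 * κ * f * B ^ (r+1) := by
          rw [← Real.exp_add, show -t / m + t / m = 0 by ring, Real.exp_zero, mul_one]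
        have t1 : Real.exp (-t / m) * |x 0| ≤ Real.exp (-t / m) * (f * A ^ (r+2)) :=
          mul_le_mul_of_nonneg_left hq he0
        have t2 : (0:ℝ) ≤ Real.exp (-t / m) * ((1 + t / m) ^ (r+2) - 1) * (A - 2 * κ)
            * (f * A ^ (r+1)) :=
          mul_nonneg (mul_nonneg (mul_nonneg he0 (by linarith)) (by linarith)) (by positivity)
        have t3 : (0:ℝ) ≤ (1 - Real.exp (-t / m)) * (B - 2 * κ) * (f * B ^ (r+1)) :=
          mul_nonneg (mul_nonneg (by linarith) (by linarith)) (by positivity)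
        have hfacteq : (Nat.factorial (r + 2 - 1) : ℝ) = f := by
          rw [show r + 2 - 1 = r + 1 from rfl, hfdef]
        have hpA : A ^ (r+2) = A ^ (r+1) * A := by ring
        have hpB : B ^ (r+2) = B ^ (r+1) * B := by ring
        rw [hfacteq, hpA, hpB]
        have hq2 : |x 0| ≤ f * (A ^ (r+1) * A) := by rw [← hpA]; exact hq
        have t1' : Real.exp (-t / m) * |x 0| ≤ Real.exp (-t / m) * (f * (A ^ (r+1) * A)) :=
          mul_le_mul_of_nonneg_left hq2 he0
        nlinarith [hob, t1', t2, t3, heeB]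
  -- conclude
  intro n hn i j t ht
  exact (key n hn).2 i j t ht
end
end
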